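/- arXiv:2506.15632 — 3 statements merged into one kernel-verified Lean document; each statement's English description precedes it below -/
import Mathlib

section
/- Let K be a closed convex subset of ℝⁿ and h : ℝⁿ → ℝ be differentiable strongly quasiconvex with modulus γ > 0, with unique minimizer x̄ ∈ K. If limsup_{x∈K, ‖x‖→∞} h(x)/‖x‖² < +∞ and limsup_{x∈K, x→x̄} (h(x) - h(x̄))/‖x - x̄‖² < +∞, then there exists κ ∈ (0,1] such that κ(h(y) - h(x̄)) ≤ ⟨∇h(y), y - x̄⟩ for all y ∈ K (h is quasar-convex on K). -/
/-!
Strong quasiconvexity at the pair `(y, x̄)`, differentiated along the segment from `y` towards the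
minimizer `x̄`, gives `(γ/2)‖y - x̄‖² ≤ ⟪∇h(y), y - x̄⟫`. It therefore suffices to bound
`h(y) - h(x̄)` by `C‖y - x̄‖²` on all of `K`: near `x̄` this is the local growth hypothesis, far
away it follows from the quadratic growth at infinity, and in between `‖y - x̄‖` is bounded below
while `h` is bounded above on a compact ball. Then `κ = min 1 (γ / 2C)` works.
-/

open Filter Topology Set

theorem HasDerivWithinAt.le_of_eventually_le_add_mul {φ ψ : ℝ → ℝ} {φ' a x : ℝ}
    (hφ : HasDerivWithinAt φ φ' (Ioi x) x)
    (hle : ∀ᶠ t in 𝓝[>] x, φ t ≤ φ x + (t - x) * ψ t) (hψ : Tendsto ψ (𝓝[>] x) (𝓝 a)) :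
    φ' ≤ a := by
  have hslope := (hasDerivWithinAt_iff_tendsto_slope' self_notMem_Ioi).mp hφ
  refine le_of_tendsto_of_tendsto hslope hψ ?_
  filter_upwards [hle, self_mem_nhdsWithin] with t ht hxt
  rw [slope_def_field, div_le_iff₀ (sub_pos.mpr hxt)]
  linarith

section

variable {E : Type*} [NormedAddCommGroup E] [InnerProductSpace ℝ E]

def StronglyQuasiconvex (γ : ℝ) (h : E → ℝ) : Prop :=
  ∀ x y : E, ∀ lam : ℝ, lam ∈ Icc (0 : ℝ) 1 →
    h (lam • y + (1 - lam) • x) ≤ max (h y) (h x) - lam * (1 - lam) * (γ / 2) * ‖x - y‖ ^ 2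

variable [CompleteSpace E]

theorem HasGradientAt.hasDerivAt_comp_add_smul {h : E → ℝ} {g x : E} (hg : HasGradientAt h g x)
    (v : E) : HasDerivAt (fun t : ℝ ↦ h (x + t • v)) (inner ℝ g v) 0 := by
  have hline : HasDerivAt (fun t : ℝ ↦ x + t • v) v 0 := by
    simpa using ((hasDerivAt_id (0 : ℝ)).smul_const v).const_add x
  have hg' : HasFDerivAt h (InnerProductSpace.toDual ℝ E g) (x + (0 : ℝ) • v) := by
    simpa using hg.hasFDerivAt
  have := hg'.comp_hasDerivAt (0 : ℝ) hline
  simp only [InnerProductSpace.toDual_apply_apply] at this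
  exact this

theorem StronglyQuasiconvex.mul_sq_le_inner {γ : ℝ} {h : E → ℝ} (hh : StronglyQuasiconvex γ h)
    {g x y : E} (hg : HasGradientAt h g y) (hle : h x ≤ h y) :
    γ / 2 * ‖y - x‖ ^ 2 ≤ inner ℝ g (y - x) := by
  have hdecrease : ∀ᶠ t in 𝓝[>] (0 : ℝ),
      h (y + t • (x - y)) ≤ h y + t * -((1 - t) * (γ / 2) * ‖y - x‖ ^ 2) := by
    filter_upwards [Ioo_mem_nhdsGT one_pos] with t ht
    have hseg : y + t • (x - y) = t • x + (1 - t) • y := by module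
    have := hh y x t (Ioo_subset_Icc_self ht)
    rw [max_eq_right hle] at this
    rw [hseg]
    linarith
  have hlim : Tendsto (fun t : ℝ ↦ -((1 - t) * (γ / 2) * ‖y - x‖ ^ 2)) (𝓝[>] 0)
      (𝓝 (-(γ / 2 * ‖y - x‖ ^ 2))) :=
    tendsto_nhdsWithin_of_tendsto_nhds (Continuous.tendsto' (by fun_prop) _ _ (by ring))
  have := (hg.hasDerivAt_comp_add_smul (x - y)).hasDerivWithinAt.le_of_eventually_le_add_mul
    (by simpa using hdecrease) hlim
  have hflip : inner ℝ g (y - x) = -inner ℝ g (x - y) := by rw [← inner_neg_right, neg_sub]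
  linarith

end

theorem sub_le_mul_sq_norm_sub_of_div_sq_norm_le {E : Type*} [SeminormedAddCommGroup E]
    {a b C : ℝ} {x x₀ : E} (hx : 2 * ‖x₀‖ + 2 ≤ ‖x‖) (ha : a / ‖x‖ ^ 2 ≤ C) :
    a - b ≤ (4 * |C| + |b|) * ‖x - x₀‖ ^ 2 := by
  have ha' : a ≤ C * ‖x‖ ^ 2 := (div_le_iff₀ (by nlinarith [norm_nonneg x₀])).1 ha
  have hdist : ‖x‖ - ‖x₀‖ ≤ ‖x - x₀‖ := norm_sub_norm_le _ _
  have hone : 1 ≤ ‖x - x₀‖ ^ 2 := one_le_pow₀ (by linarith [norm_nonneg x₀])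
  have hfour : ‖x‖ ^ 2 ≤ 4 * ‖x - x₀‖ ^ 2 := by nlinarith [norm_nonneg x₀]
  nlinarith [le_abs_self C, neg_abs_le b, abs_nonneg C, abs_nonneg b]

theorem le_max_zero_div_sq_mul_sq {a δ d : ℝ} (hδ : 0 < δ) (hd : δ ≤ d) :
    a ≤ max 0 a / δ ^ 2 * d ^ 2 := by
  have : δ ^ 2 ≤ d ^ 2 := pow_le_pow_left₀ hδ.le hd 2
  calc a ≤ max 0 a := le_max_right _ _
    _ = max 0 a / δ ^ 2 * δ ^ 2 := by field_simp
    _ ≤ max 0 a / δ ^ 2 * d ^ 2 := by gcongr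

section

variable {E : Type*} [NormedAddCommGroup E] [ProperSpace E] {h : E → ℝ} {K : Set E}

theorem exists_sub_le_mul_sq_of_le_norm_sub (hc : Continuous h) (x₀ : E) {δ : ℝ} (hδ : 0 < δ)
    (hinf : ∃ C R : ℝ, ∀ x ∈ K, R ≤ ‖x‖ → h x / ‖x‖ ^ 2 ≤ C) :
    ∃ C, ∀ x ∈ K, δ ≤ ‖x - x₀‖ → h x - h x₀ ≤ C * ‖x - x₀‖ ^ 2 := by
  obtain ⟨C, R, hCR⟩ := hinf
  set R₁ := max R (2 * ‖x₀‖ + 2)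
  obtain ⟨M, hM⟩ := (isCompact_closedBall (0 : E) R₁).bddAbove_image hc.continuousOn
  refine ⟨max (4 * |C| + |h x₀|) (max 0 (M - h x₀) / δ ^ 2), fun x hx hδx => ?_⟩
  rcases le_or_gt R₁ ‖x‖ with hfar | hnear
  · calc h x - h x₀ ≤ (4 * |C| + |h x₀|) * ‖x - x₀‖ ^ 2 :=
          sub_le_mul_sq_norm_sub_of_div_sq_norm_le ((le_max_right _ _).trans hfar)
            (hCR x hx ((le_max_left _ _).trans hfar))
      _ ≤ _ := by gcongr; exact le_max_left _ _
  · have hxM : h x ≤ M := hM ⟨x, mem_closedBall_zero_iff.2 hnear.le, rfl⟩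
    calc h x - h x₀ ≤ M - h x₀ := by linarith
      _ ≤ max 0 (M - h x₀) / δ ^ 2 * ‖x - x₀‖ ^ 2 := le_max_zero_div_sq_mul_sq hδ hδx
      _ ≤ _ := by gcongr; exact le_max_right _ _

theorem exists_pos_sub_le_mul_sq (hc : Continuous h) {x₀ : E}
    (hinf : ∃ C R : ℝ, ∀ x ∈ K, R ≤ ‖x‖ → h x / ‖x‖ ^ 2 ≤ C)
    (hloc : ∃ C δ : ℝ, 0 < δ ∧ ∀ x ∈ K, x ≠ x₀ → ‖x - x₀‖ ≤ δ →
      (h x - h x₀) / ‖x - x₀‖ ^ 2 ≤ C) :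
    ∃ C, 0 < C ∧ ∀ x ∈ K, h x - h x₀ ≤ C * ‖x - x₀‖ ^ 2 := by
  obtain ⟨Cl, δ, hδ, hCl⟩ := hloc
  obtain ⟨Cf, hCf⟩ := exists_sub_le_mul_sq_of_le_norm_sub hc x₀ hδ hinf
  refine ⟨max 1 (max Cl Cf), by positivity, fun x hx => ?_⟩
  by_cases hx₀ : x = x₀
  · simp [hx₀]
  rcases le_total ‖x - x₀‖ δ with hnear | hfar
  · have hpos : 0 < ‖x - x₀‖ ^ 2 := pow_pos (norm_pos_iff.2 (sub_ne_zero.2 hx₀)) 2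
    calc h x - h x₀ ≤ Cl * ‖x - x₀‖ ^ 2 := (div_le_iff₀ hpos).1 (hCl x hx hx₀ hnear)
      _ ≤ _ := by gcongr; simp
  · exact (hCf x hx hfar).trans (by gcongr; simp)

end

theorem quasar_convexity_under_growth_conditions_general
    {n : ℕ} (K : Set (EuclideanSpace ℝ (Fin n)))
    (h : EuclideanSpace ℝ (Fin n) → ℝ)
    (g : EuclideanSpace ℝ (Fin n) → EuclideanSpace ℝ (Fin n))
    (hgrad : ∀ x, HasGradientAt h (g x) x)
    (γ : ℝ) (hγ : 0 < γ)
    (hsq : ∀ x y : EuclideanSpace ℝ (Fin n), ∀ lam : ℝ, lam ∈ Set.Icc (0:ℝ) 1 →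
      h (lam • y + (1 - lam) • x) ≤
        max (h y) (h x) - lam * (1 - lam) * (γ / 2) * ‖x - y‖ ^ 2)
    (xbar : EuclideanSpace ℝ (Fin n))
    (hmin : ∀ x, h xbar ≤ h x)
    (hgrowth_infty : ∃ C R : ℝ, ∀ x ∈ K, R ≤ ‖x‖ → h x / ‖x‖ ^ 2 ≤ C)
    (hgrowth_local : ∃ C : ℝ, ∃ δ : ℝ, 0 < δ ∧ ∀ x ∈ K, x ≠ xbar → ‖x - xbar‖ ≤ δ →
      (h x - h xbar) / ‖x - xbar‖ ^ 2 ≤ C) :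
    ∃ κ : ℝ, 0 < κ ∧ κ ≤ 1 ∧
      ∀ y ∈ K, κ * (h y - h xbar) ≤ (inner ℝ (g y) (y - xbar) : ℝ) := by
  have hcont : Continuous h := continuous_iff_continuousAt.2 fun x ↦ (hgrad x).continuousAt
  obtain ⟨C, hC, hquad⟩ := exists_pos_sub_le_mul_sq hcont hgrowth_infty hgrowth_local
  refine ⟨min 1 (γ / (2 * C)), by positivity, min_le_left _ _, fun y hy ↦ ?_⟩
  calc min 1 (γ / (2 * C)) * (h y - h xbar) ≤ γ / (2 * C) * (h y - h xbar) := by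
        gcongr
        · exact sub_nonneg.2 (hmin y)
        · exact min_le_right _ _
    _ ≤ γ / (2 * C) * (C * ‖y - xbar‖ ^ 2) := by gcongr; exact hquad y hy
    _ = γ / 2 * ‖y - xbar‖ ^ 2 := by field_simp
    _ ≤ inner ℝ (g y) (y - xbar) := 
      StronglyQuasiconvex.mul_sq_le_inner hsq (hgrad y) (hmin y)

theorem quasar_convexity_under_growth_conditions
    {n : ℕ} (K : Set (EuclideanSpace ℝ (Fin n))) (hKc : IsClosed K) (hKconv : Convex ℝ K)
    (h : EuclideanSpace ℝ (Fin n) → ℝ)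
    (g : EuclideanSpace ℝ (Fin n) → EuclideanSpace ℝ (Fin n))
    (hgrad : ∀ x, HasGradientAt h (g x) x)
    (γ : ℝ) (hγ : 0 < γ)
    (hsq : ∀ x y : EuclideanSpace ℝ (Fin n), ∀ lam : ℝ, lam ∈ Set.Icc (0:ℝ) 1 →
      h (lam • y + (1 - lam) • x) ≤
        max (h y) (h x) - lam * (1 - lam) * (γ / 2) * ‖x - y‖ ^ 2)
    (xbar : EuclideanSpace ℝ (Fin n)) (hxbar : xbar ∈ K)
    (hmin : ∀ x, h xbar ≤ h x)
    (hgrowth_infty : ∃ C R : ℝ, ∀ x ∈ K, R ≤ ‖x‖ → h x / ‖x‖ ^ 2 ≤ C)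
    (hgrowth_local : ∃ C : ℝ, ∃ δ : ℝ, 0 < δ ∧ ∀ x ∈ K, x ≠ xbar → ‖x - xbar‖ ≤ δ →
      (h x - h xbar) / ‖x - xbar‖ ^ 2 ≤ C) :
    ∃ κ : ℝ, 0 < κ ∧ κ ≤ 1 ∧
      ∀ y ∈ K, κ * (h y - h xbar) ≤ (inner ℝ (g y) (y - xbar) : ℝ) :=
  quasar_convexity_under_growth_conditions_general K h g hgrad γ hγ hsq xbar hmin hgrowth_infty
    hgrowth_local
end

section
/- Let h : ℝⁿ → ℝ be differentiable with L-Lipschitz gradient and strongly quasiconvex with modulus γ > 0, with minimizer x̄. Fix η > 1 and 0 < β < γ/(ηL²). Given any y ∈ ℝⁿ, let x⁺ := y - β∇h(y). Then ‖x⁺ - x̄‖² + μ₂‖x⁺ - y‖² ≤ μ₁‖y - x̄‖², where μ₁ := 1/(1 + β(γ - ηβL²)) ∈ (0,1) and μ₂ := (1 - 1/η)/(1 + β(γ - ηβL²)) > 0. -/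
/-!
Let `x⁺ = y - β ∇h(y)`. Expanding `‖y - x̄‖² = ‖(x⁺ - x̄) - (x⁺ - y)‖²` leaves the cross term
`2⟪x⁺ - y, x⁺ - x̄⟫ = -2β⟪∇h(x⁺), x⁺ - x̄⟫ - 2β⟪∇h(y) - ∇h(x⁺), x⁺ - x̄⟫`. Strong quasiconvexity,
differentiated along the segment from `x⁺` to the minimizer `x̄`, bounds the first inner product
from below by `γ/2 ‖x⁺ - x̄‖²`; the Lipschitz bound and Young's inequality with weight `η` control
the second. Collecting terms gives
`(1 + β(γ - ηβL²)) ‖x⁺ - x̄‖² + (1 - 1/η) ‖x⁺ - y‖² ≤ ‖y - x̄‖²`, and dividing by the first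
coefficient, which exceeds `1` because `β < γ / (ηL²)`, gives the claim.
-/

open Set

open scoped RealInnerProductSpace

def StronglyQuasiconvexWith {E : Type*} [NormedAddCommGroup E] [Module ℝ E]
    (γ : ℝ) (h : E → ℝ) : Prop :=
  ∀ x y : E, ∀ t ∈ Icc (0 : ℝ) 1,
    h (t • y + (1 - t) • x) ≤ max (h y) (h x) - t * (1 - t) * (γ / 2) * ‖x - y‖ ^ 2

theorem HasDerivAt.le_neg_of_le_sub_mul_one_sub {φ : ℝ → ℝ} {φ' c : ℝ}
    (hφ : HasDerivAt φ φ' 0) (hle : ∀ t ∈ Icc (0 : ℝ) 1, φ t ≤ φ 0 - t * (1 - t) * c) :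
    φ' ≤ -c := by
  set ψ : ℝ → ℝ := fun t ↦ φ t + t * (1 - t) * c
  have hψ : HasDerivAt ψ (φ' + c) 0 := by
    refine (hφ.add (((hasDerivAt_id 0).mul
      ((hasDerivAt_const 0 (1 : ℝ)).sub (hasDerivAt_id 0))).mul_const c)).congr_deriv ?_
    simp
  have hmax : IsLocalMaxOn ψ (Icc 0 1) 0 :=
    Filter.mem_of_superset self_mem_nhdsWithin fun t ht ↦
      show ψ t ≤ ψ 0 by simp only [ψ]; linarith [hle t ht]
  have hone : (1 : ℝ) ∈ posTangentConeAt (Icc 0 1) 0 :=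
    mem_posTangentConeAt_of_segment_subset (by simp [segment_eq_Icc])
  have := hmax.hasFDerivWithinAt_nonpos hψ.hasDerivWithinAt.hasFDerivWithinAt hone
  simp only [ContinuousLinearMap.toSpanSingleton_apply, smul_eq_mul, one_mul] at this
  linarith

theorem StronglyQuasiconvexWith.half_mul_norm_sq_le_inner_gradient
    {E : Type*} [NormedAddCommGroup E] [InnerProductSpace ℝ E] [CompleteSpace E]
    {γ : ℝ} {h : E → ℝ} {g z xbar : E} (hh : StronglyQuasiconvexWith γ h)
    (hgrad : HasGradientAt h g z) (hle : h xbar ≤ h z) :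
    γ / 2 * ‖z - xbar‖ ^ 2 ≤ ⟪g, z - xbar⟫ := by
  have hline : HasDerivAt (fun t : ℝ ↦ h (z + t • (xbar - z))) ⟪g, xbar - z⟫ 0 := by
    simpa [HasLineDerivAt] using hgrad.hasFDerivAt.hasLineDerivAt (xbar - z)
  have hdesc : ⟪g, xbar - z⟫ ≤ -(γ / 2 * ‖z - xbar‖ ^ 2) := by
    refine hline.le_neg_of_le_sub_mul_one_sub fun t ht ↦ ?_
    have hseg : t • xbar + (1 - t) • z = z + t • (xbar - z) := by
      rw [smul_sub, sub_smul, one_smul]; abel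
    have := hh z xbar t ht
    rw [max_eq_right hle, hseg] at this
    simpa [mul_assoc] using this
  rw [← neg_sub z xbar, inner_neg_right] at hdesc
  linarith

theorem norm_sq_le_of_gradient_step {E : Type*} [NormedAddCommGroup E] [InnerProductSpace ℝ E]
    {x y xbar a b : E} {β γ L η : ℝ} (hβ : 0 ≤ β) (hη : 0 < η) (hx : x = y - β • a)
    (hb : γ / 2 * ‖x - xbar‖ ^ 2 ≤ ⟪b, x - xbar⟫) (hab : ‖a - b‖ ≤ L * ‖y - x‖) :
    (1 + β * (γ - η * β * L ^ 2)) * ‖x - xbar‖ ^ 2 + (1 - 1 / η) * ‖x - y‖ ^ 2 ≤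
      ‖y - xbar‖ ^ 2 := by
  have hexpand : ‖y - xbar‖ ^ 2 = ‖x - xbar‖ ^ 2 - 2 * ⟪x - xbar, x - y⟫ + ‖x - y‖ ^ 2 := by
    rw [← norm_sub_sq_real, sub_sub_sub_cancel_left]
  have hcross : ⟪x - xbar, x - y⟫ = -β * ⟪b, x - xbar⟫ - β * ⟪a - b, x - xbar⟫ := by
    rw [hx, sub_sub_cancel_left, inner_neg_right, inner_smul_right, real_inner_comm,
      inner_sub_left]
    ring
  have hlip : -(L * ‖x - y‖ * ‖x - xbar‖) ≤ ⟪a - b, x - xbar⟫ := by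
    rw [norm_sub_rev x y]
    exact neg_le_of_abs_le <|
      (abs_real_inner_le_norm _ _).trans (mul_le_mul_of_nonneg_right hab (norm_nonneg _))
  have hyoung := two_mul_le_add_mul_sq (a := β * L * ‖x - xbar‖) (b := ‖x - y‖) hη
  have hb' := mul_le_mul_of_nonneg_left hb hβ
  have hlip' := mul_le_mul_of_nonneg_left hlip hβ
  rw [one_div]
  linarith

theorem sub_mul_mul_sq_pos_of_lt_div {γ η β L : ℝ} (hη : 0 ≤ η) (hβ : 0 < β)
    (hβ' : β < γ / (η * L ^ 2)) :
    0 < γ - η * β * L ^ 2 := by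
  have hden : 0 < η * L ^ 2 := by
    refine lt_of_le_of_ne (by positivity) fun h0 ↦ ?_
    rw [← h0, div_zero] at hβ'
    linarith
  have := (lt_div_iff₀ hden).1 hβ'
  linarith

theorem gradient_step_contraction_general
    {n : ℕ} (h : EuclideanSpace ℝ (Fin n) → ℝ)
    (g : EuclideanSpace ℝ (Fin n) → EuclideanSpace ℝ (Fin n))
    (hgrad : ∀ x, HasGradientAt h (g x) x)
    (L : ℝ) (hLip : ∀ x y, ‖g x - g y‖ ≤ L * ‖x - y‖)
    (γ : ℝ)
    (hsq : ∀ x y : EuclideanSpace ℝ (Fin n), ∀ lam : ℝ, lam ∈ Set.Icc (0:ℝ) 1 →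
      h (lam • y + (1 - lam) • x) ≤
        max (h y) (h x) - lam * (1 - lam) * (γ / 2) * ‖x - y‖ ^ 2)
    (xbar : EuclideanSpace ℝ (Fin n)) (hmin : ∀ x, h xbar ≤ h x)
    (η β : ℝ) (hη : 1 < η) (hβ : 0 < β) (hβ' : β < γ / (η * L ^ 2))
    (μ₁ μ₂ : ℝ) (hμ₁ : μ₁ = 1 / (1 + β * (γ - η * β * L ^ 2)))
    (hμ₂ : μ₂ = (1 - 1 / η) / (1 + β * (γ - η * β * L ^ 2))) :
    (0 < μ₁ ∧ μ₁ < 1) ∧ 0 < μ₂ ∧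
    ∀ y : EuclideanSpace ℝ (Fin n),
      ‖(y - β • g y) - xbar‖ ^ 2 + μ₂ * ‖(y - β • g y) - y‖ ^ 2 ≤ μ₁ * ‖y - xbar‖ ^ 2 := by
  have hη0 : 0 < η := one_pos.trans hη
  set D := 1 + β * (γ - η * β * L ^ 2)
  have hD : 1 < D :=
    lt_add_of_pos_right 1 (mul_pos hβ (sub_mul_mul_sq_pos_of_lt_div hη0.le hβ hβ'))
  have hη' : 0 < 1 - 1 / η := sub_pos.2 ((div_lt_one hη0).2 hη)
  refine ⟨⟨by rw [hμ₁]; positivity, by rwa [hμ₁, div_lt_one (one_pos.trans hD)]⟩,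
    by rw [hμ₂]; positivity, fun y ↦ ?_⟩
  set x := y - β • g y
  have hmono := (show StronglyQuasiconvexWith γ h from hsq).half_mul_norm_sq_le_inner_gradient
    (hgrad x) (hmin x)
  have key := norm_sq_le_of_gradient_step hβ.le hη0 rfl hmono (hLip y x)
  rw [hμ₁, hμ₂]
  calc ‖x - xbar‖ ^ 2 + (1 - 1 / η) / D * ‖x - y‖ ^ 2
      = (D * ‖x - xbar‖ ^ 2 + (1 - 1 / η) * ‖x - y‖ ^ 2) / D := by field_simp
    _ ≤ ‖y - xbar‖ ^ 2 / D := by gcongr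
    _ = 1 / D * ‖y - xbar‖ ^ 2 := by ring

theorem gradient_step_contraction
    {n : ℕ} (h : EuclideanSpace ℝ (Fin n) → ℝ)
    (g : EuclideanSpace ℝ (Fin n) → EuclideanSpace ℝ (Fin n))
    (hgrad : ∀ x, HasGradientAt h (g x) x)
    (L : ℝ) (hL : 0 < L) (hLip : ∀ x y, ‖g x - g y‖ ≤ L * ‖x - y‖)
    (γ : ℝ) (hγ : 0 < γ)
    (hsq : ∀ x y : EuclideanSpace ℝ (Fin n), ∀ lam : ℝ, lam ∈ Set.Icc (0:ℝ) 1 →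
      h (lam • y + (1 - lam) • x) ≤
        max (h y) (h x) - lam * (1 - lam) * (γ / 2) * ‖x - y‖ ^ 2)
    (xbar : EuclideanSpace ℝ (Fin n)) (hmin : ∀ x, h xbar ≤ h x)
    (η β : ℝ) (hη : 1 < η) (hβ : 0 < β) (hβ' : β < γ / (η * L ^ 2))
    (μ₁ μ₂ : ℝ) (hμ₁ : μ₁ = 1 / (1 + β * (γ - η * β * L ^ 2)))
    (hμ₂ : μ₂ = (1 - 1 / η) / (1 + β * (γ - η * β * L ^ 2))) :
    (0 < μ₁ ∧ μ₁ < 1) ∧ 0 < μ₂ ∧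
    ∀ y : EuclideanSpace ℝ (Fin n),
      ‖(y - β • g y) - xbar‖ ^ 2 + μ₂ * ‖(y - β • g y) - y‖ ^ 2 ≤ μ₁ * ‖y - xbar‖ ^ 2 :=
  gradient_step_contraction_general h g hgrad L hLip γ hsq xbar hmin η β hη hβ hβ' μ₁ μ₂ hμ₁ hμ₂
end

section
/- Under the hypotheses of the Heavy Ball convergence theorem (h differentiable, L-Lipschitz gradient, strongly quasiconvex with modulus γ > 0, parameters satisfying α ∈ [0,√2/2), θ ∈ [0, α/(L√3)) with α > 0, β > θ(√2-1), θ+β ∈ (0, (1-2α²)/L]), the energy E_k := h(x_k) - h* + (α²/(θ+β))‖x_k-x_{k-1}‖² + (θ²/(θ+β))‖∇h(x_{k-1})‖² satisfies E_k ≤ σ(‖∇h(x_k)‖² + ‖x_{k+1} - x_k‖²), where σ := max{ (1/(θ+β))(3 + 12α²/(α² - 3θ²L²)), 2L/γ² + 3(θ+β) + 12α²β²/((α² - 3θ²L²)(θ+β)) } > 0. -/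
/-!
Strong quasiconvexity at a minimizer `x̄` gives `γ/2 ‖y - x̄‖² ≤ ⟪∇h y, y - x̄⟫`, hence
`γ ‖y - x̄‖ ≤ 2 ‖∇h y‖`; with the descent lemma `h y - h* ≤ L/2 ‖y - x̄‖²` this is the
Polyak–Łojasiewicz bound `h y - h* ≤ 2L/γ² ‖∇h y‖²`. The other two energy terms are controlled by
reading the heavy-ball step in two ways,
`α (x_k - x_{k-1}) = (x_{k+1} - x_k) + β ∇h(x_k) + θ (∇h(x_k) - ∇h(x_{k-1}))` and
`θ ∇h(x_{k-1}) = (x_{k+1} - x_k) - α (x_k - x_{k-1}) + (θ + β) ∇h(x_k)`,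
and applying `‖a + b + c‖² ≤ 3 (‖a‖² + ‖b‖² + ‖c‖²)` together with the Lipschitz bound.
-/

open Set
open scoped RealInnerProductSpace

section Gradient

variable {E : Type*} [NormedAddCommGroup E] [InnerProductSpace ℝ E] [CompleteSpace E]
  {f : E → ℝ}

theorem HasGradientAt.hasDerivAt_comp_add_smul_s17 {f' y v : E} {t : ℝ}
    (hf : HasGradientAt f f' (y + t • v)) :
    HasDerivAt (fun s : ℝ => f (y + s • v)) ⟪f', v⟫ t := by
  have hline : HasDerivAt (fun s : ℝ => y + s • v) v t := by
    simpa using ((hasDerivAt_id t).smul_const v).const_add y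
  exact hf.hasFDerivAt.comp_hasDerivAt t hline

theorem IsLocalMin.hasGradientAt_eq_zero {f' a : E} (h : IsLocalMin f a)
    (hf : HasGradientAt f f' a) : f' = 0 :=
  (InnerProductSpace.toDual ℝ E).map_eq_zero_iff.1 (h.hasFDerivAt_eq_zero hf.hasFDerivAt)

theorem le_add_inner_add_sq_of_lipschitz_gradient {f' : E → E} {L : ℝ}
    (hf : ∀ x, HasGradientAt f (f' x) x) (hLip : ∀ x y, ‖f' x - f' y‖ ≤ L * ‖x - y‖)
    (y z : E) : f z ≤ f y + ⟪f' y, z - y⟫ + L / 2 * ‖z - y‖ ^ 2 := by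
  set v := z - y
  -- the gap to the quadratic upper model is nonincreasing along the segment from `y` to `z`
  set F : ℝ → ℝ := fun t => f (y + t • v) - t * ⟪f' y, v⟫ - L * ‖v‖ ^ 2 * t ^ 2 / 2
  have hF : ∀ t, HasDerivAt F (⟪f' (y + t • v), v⟫ - ⟪f' y, v⟫ - L * ‖v‖ ^ 2 * t) t := by
    intro t
    have hq : HasDerivAt (fun s : ℝ => L * ‖v‖ ^ 2 * s ^ 2 / 2) (L * ‖v‖ ^ 2 * t) t :=
      ((hasDerivAt_pow 2 t).const_mul _).div_const 2 |>.congr_deriv (by push_cast; ring)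
    exact (((hf _).hasDerivAt_comp_add_smul_s17).sub ((hasDerivAt_id t).mul_const _)).sub hq
      |>.congr_deriv (by simp)
  have hanti : AntitoneOn F (Icc 0 1) := by
    refine antitoneOn_of_hasDerivWithinAt_nonpos (convex_Icc 0 1)
      (fun t _ => (hF t).continuousAt.continuousWithinAt)
      (fun t _ => (hF t).hasDerivWithinAt) fun t ht => ?_
    rw [interior_Icc] at ht
    have hLt : ‖f' (y + t • v) - f' y‖ ≤ L * (t * ‖v‖) := by
      simpa [norm_smul, abs_of_pos ht.1] using hLip (y + t • v) y
    have := real_inner_le_norm (f' (y + t • v) - f' y) v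
    rw [inner_sub_left] at this
    nlinarith [mul_le_mul_of_nonneg_right hLt (norm_nonneg v)]
  have h01 := hanti (left_mem_Icc.2 zero_le_one) (right_mem_Icc.2 zero_le_one) zero_le_one
  simp only [F, v, zero_smul, add_zero, one_smul, add_sub_cancel] at h01
  linarith

def StrongQuasiconvex (γ : ℝ) (f : E → ℝ) : Prop :=
  ∀ x y : E, ∀ lam : ℝ, lam ∈ Icc (0:ℝ) 1 →
    f (lam • y + (1 - lam) • x) ≤ max (f y) (f x) - lam * (1 - lam) * (γ / 2) * ‖x - y‖ ^ 2

theorem StrongQuasiconvex.mul_sq_le_inner_gradient {γ : ℝ} {f' y xbar : E}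
    (hsq : StrongQuasiconvex γ f) (hmin : f xbar ≤ f y) (hf : HasGradientAt f f' y) :
    γ / 2 * ‖y - xbar‖ ^ 2 ≤ ⟪f', y - xbar⟫ := by
  set v := xbar - y
  set c := γ / 2 * ‖y - xbar‖ ^ 2
  -- `ψ` is maximal on `[0, 1]` at `0`, so by Fermat's rule `⟪f', v⟫ + c ≤ 0`
  set ψ : ℝ → ℝ := fun t => f (y + t • v) + t * (1 - t) * c
  have hmax : IsLocalMaxOn ψ (Icc 0 1) 0 := IsMaxOn.localize fun t ht => by
    have := hsq y xbar t ht
    rw [max_eq_right hmin, show t • xbar + (1 - t) • y = y + t • v by module] at this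
    simp only [mem_ofPred_eq, ψ, c, zero_smul, add_zero, zero_mul]
    linarith [show t * (1 - t) * (γ / 2 * ‖y - xbar‖ ^ 2)
      = t * (1 - t) * (γ / 2) * ‖y - xbar‖ ^ 2 by ring]
  have hψ : HasDerivAt ψ (⟪f', v⟫ + c) 0 := by
    have hq : HasDerivAt (fun t : ℝ => t * (1 - t) * c) c 0 :=
      (((hasDerivAt_id 0).mul ((hasDerivAt_id 0).const_sub 1)).mul_const c).congr_deriv
        (by simp)
    exact (HasGradientAt.hasDerivAt_comp_add_smul_s17 (by rwa [zero_smul, add_zero])).add hq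
  have hone : (1 : ℝ) ∈ posTangentConeAt (Icc 0 1) 0 := by
    simpa using sub_mem_posTangentConeAt_of_segment_subset (segment_eq_Icc zero_le_one).subset
  have := hmax.hasFDerivWithinAt_nonpos hψ.hasFDerivAt.hasFDerivWithinAt hone
  simp only [ContinuousLinearMap.toSpanSingleton_apply, one_smul] at this
  rw [← neg_sub, inner_neg_right]
  linarith

theorem StrongQuasiconvex.sub_le_of_lipschitz_gradient {γ L : ℝ} {f' : E → E} {xbar : E}
    (hsq : StrongQuasiconvex γ f) (hγ : 0 < γ) (hL : 0 ≤ L)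
    (hf : ∀ x, HasGradientAt f (f' x) x) (hLip : ∀ x y, ‖f' x - f' y‖ ≤ L * ‖x - y‖)
    (hmin : ∀ x, f xbar ≤ f x) (y : E) :
    f y - f xbar ≤ 2 * L / γ ^ 2 * ‖f' y‖ ^ 2 := by
  have hcrit : f' xbar = 0 := 
    IsLocalMin.hasGradientAt_eq_zero (.of_forall hmin) (hf xbar)
  have hup := le_add_inner_add_sq_of_lipschitz_gradient hf hLip xbar y
  rw [hcrit, inner_zero_left, add_zero] at hup
  have hdist : γ * ‖y - xbar‖ ≤ 2 * ‖f' y‖ := by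
    have := (hsq.mul_sq_le_inner_gradient (hmin y) (hf y)).trans (real_inner_le_norm _ _)
    rcases (norm_nonneg (y - xbar)).eq_or_lt with h0 | h0
    · rw [← h0, mul_zero]
      positivity
    · nlinarith
  calc f y - f xbar ≤ L / 2 * ‖y - xbar‖ ^ 2 := by linarith
    _ = L / (2 * γ ^ 2) * (γ * ‖y - xbar‖) ^ 2 := by field_simp
    _ ≤ L / (2 * γ ^ 2) * (2 * ‖f' y‖) ^ 2 := by gcongr
    _ = 2 * L / γ ^ 2 * ‖f' y‖ ^ 2 := by field_simp

end Gradient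

theorem norm_add₃_sq_le {F : Type*} [SeminormedAddGroup F] (a b c : F) :
    ‖a + b + c‖ ^ 2 ≤ 3 * (‖a‖ ^ 2 + ‖b‖ ^ 2 + ‖c‖ ^ 2) :=
  calc ‖a + b + c‖ ^ 2 ≤ (‖a‖ + ‖b‖ + ‖c‖) ^ 2 := by gcongr; exact norm_add₃_le
    _ ≤ 3 * (‖a‖ ^ 2 + ‖b‖ ^ 2 + ‖c‖ ^ 2) := by
      nlinarith [sq_nonneg (‖a‖ - ‖b‖), sq_nonneg (‖a‖ - ‖c‖), sq_nonneg (‖b‖ - ‖c‖)]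

section HeavyBall

variable {F : Type*} [SeminormedAddCommGroup F] [NormedSpace ℝ F] {x₀ x₁ x₂ g₀ g₁ : F}
  {α θ β : ℝ}

theorem heavyBall_momentum_sq_le {L : ℝ}
    (hstep : x₂ - x₁ = α • (x₁ - x₀) - (θ + β) • g₁ + θ • g₀)
    (hLip : ‖g₁ - g₀‖ ≤ L * ‖x₁ - x₀‖) :
    (α ^ 2 - 3 * θ ^ 2 * L ^ 2) * ‖x₁ - x₀‖ ^ 2 ≤ 3 * ‖x₂ - x₁‖ ^ 2 + 3 * β ^ 2 * ‖g₁‖ ^ 2 := by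
  have hsplit : α • (x₁ - x₀) = (x₂ - x₁) + β • g₁ + θ • (g₁ - g₀) := by
    rw [hstep]; module
  have h := norm_add₃_sq_le (x₂ - x₁) (β • g₁) (θ • (g₁ - g₀))
  rw [← hsplit] at h
  simp only [norm_smul, Real.norm_eq_abs, mul_pow, sq_abs] at h
  have hq : ‖g₁ - g₀‖ ^ 2 ≤ L ^ 2 * ‖x₁ - x₀‖ ^ 2 := by
    rw [← mul_pow]; exact pow_le_pow_left₀ (norm_nonneg _) hLip 2
  nlinarith [mul_le_mul_of_nonneg_left hq (sq_nonneg θ)]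

theorem heavyBall_prev_gradient_sq_le
    (hstep : x₂ - x₁ = α • (x₁ - x₀) - (θ + β) • g₁ + θ • g₀) :
    θ ^ 2 * ‖g₀‖ ^ 2 ≤
      3 * ‖x₂ - x₁‖ ^ 2 + 3 * α ^ 2 * ‖x₁ - x₀‖ ^ 2 + 3 * (θ + β) ^ 2 * ‖g₁‖ ^ 2 := by
  have hsplit : θ • g₀ = (x₂ - x₁) + -(α • (x₁ - x₀)) + (θ + β) • g₁ := by
    rw [hstep]; module
  have h := norm_add₃_sq_le (x₂ - x₁) (-(α • (x₁ - x₀))) ((θ + β) • g₁)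
  rw [← hsplit] at h
  simpa only [norm_neg, norm_smul, Real.norm_eq_abs, mul_pow, sq_abs, mul_add, ← mul_assoc]
    using h

end HeavyBall

theorem heavyBall_energy_tail_le {α θ β δ a b d e : ℝ} (hδ : 0 < δ) (hD : 0 < θ + β)
    (hmom : δ * a ^ 2 ≤ 3 * d ^ 2 + 3 * β ^ 2 * b ^ 2)
    (hgrad : θ ^ 2 * e ^ 2 ≤ 3 * d ^ 2 + 3 * α ^ 2 * a ^ 2 + 3 * (θ + β) ^ 2 * b ^ 2) :
    α ^ 2 / (θ + β) * a ^ 2 + θ ^ 2 / (θ + β) * e ^ 2 ≤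
      (3 * (θ + β) + 12 * α ^ 2 * β ^ 2 / (δ * (θ + β))) * b ^ 2
        + 1 / (θ + β) * (3 + 12 * α ^ 2 / δ) * d ^ 2 := by
  -- eliminate `a` by feeding the momentum bound into `4 α² a² ≥ α² a² + 3 α² a²`
  have key : δ * (α ^ 2 * a ^ 2 + θ ^ 2 * e ^ 2) ≤
      (3 * δ + 12 * α ^ 2) * d ^ 2 + (3 * (θ + β) ^ 2 * δ + 12 * α ^ 2 * β ^ 2) * b ^ 2 := by
    nlinarith [mul_le_mul_of_nonneg_left hgrad hδ.le,
      mul_le_mul_of_nonneg_left hmom (by positivity : (0:ℝ) ≤ 4 * α ^ 2)]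
  have hδD := mul_pos hδ hD
  calc α ^ 2 / (θ + β) * a ^ 2 + θ ^ 2 / (θ + β) * e ^ 2
        = δ * (α ^ 2 * a ^ 2 + θ ^ 2 * e ^ 2) / (δ * (θ + β)) := by field_simp
    _ ≤ ((3 * δ + 12 * α ^ 2) * d ^ 2 + (3 * (θ + β) ^ 2 * δ + 12 * α ^ 2 * β ^ 2) * b ^ 2)
          / (δ * (θ + β)) := by gcongr
    _ = _ := by field_simp; ring

theorem heavy_ball_hessian_energy_upper_bound_general
    {n : ℕ} (h : EuclideanSpace ℝ (Fin n) → ℝ)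
    (g : EuclideanSpace ℝ (Fin n) → EuclideanSpace ℝ (Fin n))
    (hgrad : ∀ x, HasGradientAt h (g x) x)
    (L : ℝ) (hL : 0 < L) (hLip : ∀ x y, ‖g x - g y‖ ≤ L * ‖x - y‖)
    (γ : ℝ) (hγ : 0 < γ)
    (hsq : ∀ x y : EuclideanSpace ℝ (Fin n), ∀ lam : ℝ, lam ∈ Set.Icc (0:ℝ) 1 →
      h (lam • y + (1 - lam) • x) ≤
        max (h y) (h x) - lam * (1 - lam) * (γ / 2) * ‖x - y‖ ^ 2)
    (xbar : EuclideanSpace ℝ (Fin n)) (hmin : ∀ x, h xbar ≤ h x)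
    (hstar : ℝ) (hstar_def : hstar = h xbar)
    (α θ β : ℝ)
    (hθ : 0 ≤ θ) (hθ' : θ < α / (L * Real.sqrt 3))
    (hθβ : 0 < θ + β)
    (x : ℕ → EuclideanSpace ℝ (Fin n))
    (hiter : ∀ k, x (k + 2) - x (k + 1) =
      α • (x (k + 1) - x k) - (θ + β) • g (x (k + 1)) + θ • g (x k))
    (E : ℕ → ℝ)
    (hE : ∀ k, E k = h (x (k + 1)) - hstar
        + (α ^ 2 / (θ + β)) * ‖x (k + 1) - x k‖ ^ 2
        + (θ ^ 2 / (θ + β)) * ‖g (x k)‖ ^ 2)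
    (σ : ℝ)
    (hσ : σ = max ((1 / (θ + β)) * (3 + 12 * α ^ 2 / (α ^ 2 - 3 * θ ^ 2 * L ^ 2)))
        (2 * L / γ ^ 2 + 3 * (θ + β)
          + 12 * α ^ 2 * β ^ 2 / ((α ^ 2 - 3 * θ ^ 2 * L ^ 2) * (θ + β)))) :
    0 < σ ∧ ∀ k, E k ≤ σ * (‖g (x (k + 1))‖ ^ 2 + ‖x (k + 2) - x (k + 1)‖ ^ 2) := by
  have hδ : 0 < α ^ 2 - 3 * θ ^ 2 * L ^ 2 := by
    have hθL : θ * (L * √3) < α := (lt_div_iff₀ (by positivity)).1 hθ'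
    have := pow_lt_pow_left₀ hθL (by positivity) two_ne_zero
    nlinarith [Real.sq_sqrt (show (0:ℝ) ≤ 3 by norm_num)]
  have hσ₁ := hσ ▸ le_max_left _ _
  have hσ₂ := hσ ▸ le_max_right _ _
  refine ⟨lt_of_lt_of_le ?_ hσ₂, fun k => ?_⟩
  · exact add_pos_of_pos_of_nonneg (add_pos (by positivity) (by linarith))
      (div_nonneg (by positivity) (mul_pos hδ hθβ).le)
  have hPL := hstar_def ▸
    StrongQuasiconvex.sub_le_of_lipschitz_gradient hsq hγ hL.le hgrad hLip hmin (x (k + 1))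
  have hT := heavyBall_energy_tail_le hδ hθβ (heavyBall_momentum_sq_le (hiter k) (hLip _ _))
    (heavyBall_prev_gradient_sq_le (hiter k))
  rw [hE k]
  linarith [mul_le_mul_of_nonneg_right hσ₁ (sq_nonneg ‖x (k + 2) - x (k + 1)‖),
    mul_le_mul_of_nonneg_right hσ₂ (sq_nonneg ‖g (x (k + 1))‖)]

theorem heavy_ball_hessian_energy_upper_bound
    {n : ℕ} (h : EuclideanSpace ℝ (Fin n) → ℝ)
    (g : EuclideanSpace ℝ (Fin n) → EuclideanSpace ℝ (Fin n))
    (hgrad : ∀ x, HasGradientAt h (g x) x)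
    (L : ℝ) (hL : 0 < L) (hLip : ∀ x y, ‖g x - g y‖ ≤ L * ‖x - y‖)
    (γ : ℝ) (hγ : 0 < γ)
    (hsq : ∀ x y : EuclideanSpace ℝ (Fin n), ∀ lam : ℝ, lam ∈ Set.Icc (0:ℝ) 1 →
      h (lam • y + (1 - lam) • x) ≤
        max (h y) (h x) - lam * (1 - lam) * (γ / 2) * ‖x - y‖ ^ 2)
    (xbar : EuclideanSpace ℝ (Fin n)) (hmin : ∀ x, h xbar ≤ h x)
    (hstar : ℝ) (hstar_def : hstar = h xbar)
    (α θ β : ℝ)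
    (hα0 : 0 < α) (hα' : α < Real.sqrt 2 / 2)
    (hθ : 0 ≤ θ) (hθ' : θ < α / (L * Real.sqrt 3))
    (hβ : θ * (Real.sqrt 2 - 1) < β)
    (hθβ : 0 < θ + β) (hθβ' : θ + β ≤ (1 - 2 * α ^ 2) / L)
    (x : ℕ → EuclideanSpace ℝ (Fin n))
    (hiter : ∀ k, x (k + 2) - x (k + 1) =
      α • (x (k + 1) - x k) - (θ + β) • g (x (k + 1)) + θ • g (x k))
    (E : ℕ → ℝ)
    (hE : ∀ k, E k = h (x (k + 1)) - hstar
        + (α ^ 2 / (θ + β)) * ‖x (k + 1) - x k‖ ^ 2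
        + (θ ^ 2 / (θ + β)) * ‖g (x k)‖ ^ 2)
    (σ : ℝ)
    (hσ : σ = max ((1 / (θ + β)) * (3 + 12 * α ^ 2 / (α ^ 2 - 3 * θ ^ 2 * L ^ 2)))
        (2 * L / γ ^ 2 + 3 * (θ + β)
          + 12 * α ^ 2 * β ^ 2 / ((α ^ 2 - 3 * θ ^ 2 * L ^ 2) * (θ + β)))) :
    0 < σ ∧ ∀ k, E k ≤ σ * (‖g (x (k + 1))‖ ^ 2 + ‖x (k + 2) - x (k + 1)‖ ^ 2) :=
  heavy_ball_hessian_energy_upper_bound_general h g hgrad L hL hLip γ hγ hsq xbar hmin hstar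
    hstar_def α θ β hθ hθ' hθβ x hiter E hE σ hσ
end
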